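/- Let X be a nonempty finite set and let C belong to the class 𝒞. Then C is uniformly posterior separable if and only if C satisfies Axiom 1 (Blackwell monotonicity) and additivity, i.e. C(π∘k) = C(π) + ∫ C(k(μ)) dπ(μ) for every π ∈ Δ²(X) and every Borel kernel k : Δ(X) → Δ²(X) that is mean-preserving π-a.e. -/

import Mathlib

set_option linter.unusedSectionVars false

open MeasureTheory

namespace IC

variable {X : Type*} [Fintype X] [Nonempty X]

/-- The belief simplex Δ(X). -/
abbrev Δ (X : Type*) [Fintype X] : Set (X → ℝ) := stdSimplex ℝ X

/-- Δ²(X): Borel probability measures on Δ(X). -/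
abbrev PM (X : Type*) [Fintype X] := ProbabilityMeasure (Δ X)

/-- Barycenter of π ∈ Δ²(X). -/
noncomputable def bar (π : PM X) : X → ℝ :=
  fun x => ∫ ν, (ν : X → ℝ) x ∂(π : Measure (Δ X))

lemma eval_integrable (π : PM X) (x : X) :
    Integrable (fun ν : Δ X => (ν : X → ℝ) x) (π : Measure (Δ X)) := by
  have hc : Continuous (fun ν : Δ X => (ν : X → ℝ) x) :=
    (continuous_apply x).comp continuous_subtype_val
  refine (integrable_const (1 : ℝ)).mono' hc.aestronglyMeasurable ?_
  refine Filter.Eventually.of_forall fun ν => ?_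
  rw [Real.norm_eq_abs, abs_le]
  refine ⟨le_trans (by norm_num) (ν.2.1 x), ?_⟩
  calc (ν : X → ℝ) x ≤ ∑ y, (ν : X → ℝ) y :=
        Finset.single_le_sum (fun y _ => ν.2.1 y) (Finset.mem_univ x)
    _ = 1 := ν.2.2

lemma bar_mem (π : PM X) : bar π ∈ Δ X := by
  constructor
  · intro x; exact integral_nonneg fun ν => ν.2.1 x
  · calc ∑ x, bar π x
        = ∫ ν, ∑ x, (ν : X → ℝ) x ∂(π : Measure (Δ X)) :=
          (integral_finset_sum Finset.univ fun x _ => eval_integrable π x).symm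
      _ = ∫ _ν, (1 : ℝ) ∂(π : Measure (Δ X)) :=
          integral_congr_ae (Filter.Eventually.of_forall fun ν => ν.2.2)
      _ = 1 := by simp

/-- Barycenter as a point of the simplex. -/
noncomputable def barPt (π : PM X) : Δ X := ⟨bar π, bar_mem π⟩

/-- Dirac measure as an element of Δ²(X). -/
noncomputable def diracPM (μ : Δ X) : PM X := ⟨Measure.dirac μ, inferInstance⟩

lemma isProbabilityMeasure_bind {α β : Type*} [MeasurableSpace α] [MeasurableSpace β]
    (π : Measure α) [IsProbabilityMeasure π] (k : α → Measure β) (hk : Measurable k)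
    (hkp : ∀ a, IsProbabilityMeasure (k a)) : IsProbabilityMeasure (π.bind k) := by
  constructor
  rw [Measure.bind_apply MeasurableSet.univ hk.aemeasurable]
  have h1 : ∀ a, k a Set.univ = 1 := fun a => (hkp a).measure_univ
  simp [h1]

/-- The Borel σ-algebra on probability measures (generated by evaluations, via the
canonical σ-algebra on measures). -/
instance instMeasurableSpacePM {Ω : Type*} [MeasurableSpace Ω] :
    MeasurableSpace (ProbabilityMeasure Ω) :=
  MeasurableSpace.comap (fun μ => (μ : Measure Ω)) inferInstance

lemma measurable_pmCoe {Ω : Type*} [MeasurableSpace Ω] :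
    Measurable (fun μ : ProbabilityMeasure Ω => (μ : Measure Ω)) :=
  measurable_iff_comap_le.mpr le_rfl

/-- Composition π∘k of an information structure with a (Borel measurable) kernel. -/
noncomputable def comp (π : PM X) (k : Δ X → PM X) (hk : Measurable k) : PM X :=
  ⟨(π : Measure (Δ X)).bind (fun μ => (k μ : Measure (Δ X))),
    isProbabilityMeasure_bind _ _ (measurable_pmCoe.comp hk) (fun μ => (k μ).2)⟩

/-- ∫ π dP(π), for P a probability measure over Δ²(X). -/
noncomputable def joinPM (P : ProbabilityMeasure (PM X)) : PM X :=
  ⟨(P : Measure (PM X)).bind (fun π => (π : Measure (Δ X))),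
    isProbabilityMeasure_bind _ _ measurable_pmCoe (fun π => π.2)⟩

/-- A kernel is mean preserving π-a.e. -/
def MeanPreservingAE (π : PM X) (k : Δ X → PM X) : Prop :=
  ∀ᵐ μ ∂(π : Measure (Δ X)), bar (k μ) = (μ : X → ℝ)

/-- Axiom 1: Blackwell monotonicity. -/
def Axiom1 (C : PM X → ℝ) : Prop :=
  ∀ (π : PM X) (k : Δ X → PM X) (hk : Measurable k),
    MeanPreservingAE π k → C π ≤ C (comp π k hk)

/-- Axiom 2: subadditivity. -/
def Axiom2 (C : PM X → ℝ) : Prop :=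
  ∀ (π : PM X) (k : Δ X → PM X) (hk : Measurable k),
    C (comp π k hk) ≤ C π + ∫ μ, C (k μ) ∂(π : Measure (Δ X))

/-- The class 𝒞 of direct information cost functions. -/
structure ClassC (C : PM X → ℝ) : Prop where
  nonneg : ∀ π, 0 ≤ C π
  bounded : ∃ M : ℝ, ∀ π, C π ≤ M
  measurable : Measurable C
  dirac_zero : ∀ μ : Δ X, C (diracPM μ) = 0
  mixing : ∀ P : ProbabilityMeasure (PM X),
    (∃ μ₀ : X → ℝ, ∀ᵐ π ∂(P : Measure (PM X)), bar π = μ₀) →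
    C (joinPM P) ≤ ∫ π, C π ∂(P : Measure (PM X))
  contOn : ∀ X' : Set X, ContinuousOn C {π : PM X | {x | 0 < bar π x} = X'}

/-- A replication process for π. -/
structure RepProcess (π : PM X) where
  T : ℕ
  seq : ℕ → PM X
  k : ℕ → Δ X → PM X
  r : ℕ → Δ X → PM X
  k_meas : ∀ t, Measurable (k t)
  r_meas : ∀ t, Measurable (r t)
  init : seq 0 = diracPM (barPt π)
  final : seq (2 * T) = π
  k_mp : ∀ t, t < T → MeanPreservingAE (seq (2 * t)) (k t)
  k_comp : ∀ t, (ht : t < T) → seq (2 * t + 1) = comp (seq (2 * t)) (k t) (k_meas t)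
  r_mp : ∀ t, t < T → MeanPreservingAE (seq (2 * t + 2)) (r t)
  r_comp : ∀ t, (ht : t < T) → seq (2 * t + 1) = comp (seq (2 * t + 2)) (r t) (r_meas t)

/-- Total cost of a replication process. -/
noncomputable def totalCost (C : PM X → ℝ) {π : PM X} (R : RepProcess π) : ℝ :=
  ∑ t ∈ Finset.range R.T, ∫ μ, C (R.k t μ) ∂((R.seq (2 * t) : Measure (Δ X)))

/-- The indirect cost φ(C). -/
noncomputable def phi (C : PM X → ℝ) (π : PM X) : ℝ :=
  sInf (Set.range fun R : RepProcess π => totalCost C R)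

/-- Uniformly posterior separable cost. -/
def UPS (C : PM X → ℝ) : Prop :=
  ∃ H : (X → ℝ) → ℝ, ConvexOn ℝ (Δ X) H ∧
    ∀ π : PM X, C π = (∫ ν, H (ν : X → ℝ) ∂(π : Measure (Δ X))) - H (bar π)


/-- Additivity: equality in the subadditivity axiom, for mean-preserving kernels. -/
def Additive (C : PM X → ℝ) : Prop :=
  ∀ (π : PM X) (k : Δ X → PM X) (hk : Measurable k), MeanPreservingAE π k →
    C (comp π k hk) = C π + ∫ μ, C (k μ) ∂(π : Measure (Δ X))

/-!
Both directions go through the full-information kernel `fullInfo`, which sends a prior to the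
law of the posterior that reveals the state. Composing any `π` with it gives `fullInfo (bar π)`,
so additivity forces `C π = ∫ H dπ - H (bar π)` with `H μ = -C (fullInfo μ)`; nonnegativity of
`C` on two-point `π` is then Jensen's inequality for `H`, i.e. its convexity. Conversely, a
uniformly posterior separable representation evaluated at `fullInfo μ` writes `H` as an affine
function minus `C ∘ fullInfo`, so `H` is integrable, and Fubini for `π ∘ k` together with mean
preservation gives additivity; monotonicity follows because `C ≥ 0`.
-/

end IC

open ProbabilityTheory

namespace IC

section MixDirac

variable {α ι : Type*} [MeasurableSpace α] [Fintype ι]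

lemma measurable_stdSimplex_apply (i : ι) : Measurable fun w : stdSimplex ℝ ι => w i :=
  (measurable_pi_apply i).comp measurable_subtype_coe

lemma isProbabilityMeasure_sum_smul_dirac (w : stdSimplex ℝ ι) (a : ι → α) :
    IsProbabilityMeasure (∑ i, ENNReal.ofReal (w i) • Measure.dirac (a i)) := by
  constructor
  simp only [Measure.coe_finsetSum, Finset.sum_apply, Measure.smul_apply, measure_univ,
    smul_eq_mul, mul_one]
  rw [← ENNReal.ofReal_sum_of_nonneg fun i _ => stdSimplex.zero_le w i, stdSimplex.sum_eq_one,
    ENNReal.ofReal_one]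

noncomputable def mixDirac (w : stdSimplex ℝ ι) (a : ι → α) : ProbabilityMeasure α :=
  ⟨_, isProbabilityMeasure_sum_smul_dirac w a⟩

lemma mixDirac_apply (w : stdSimplex ℝ ι) (a : ι → α) (s : Set α) :
    (mixDirac w a : Measure α) s = ∑ i, ENNReal.ofReal (w i) * Measure.dirac (a i) s := by
  simp [mixDirac]

lemma integral_mixDirac [MeasurableSingletonClass α] (w : stdSimplex ℝ ι) (a : ι → α)
    (f : α → ℝ) : ∫ y, f y ∂(mixDirac w a : Measure α) = ∑ i, w i * f (a i) := by
  change ∫ y, f y ∂(∑ i, ENNReal.ofReal (w i) • Measure.dirac (a i)) = _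
  rw [← Measure.sum_fintype, integral_sum_dirac fun i => ENNReal.ofReal_ne_top, tsum_fintype]
  simp [ENNReal.toReal_ofReal (stdSimplex.zero_le w _)]

lemma measurable_mixDirac (a : ι → α) : Measurable fun w : stdSimplex ℝ ι => mixDirac w a := by
  refine measurable_comap_iff.mpr (Measure.measurable_of_measurable_coe _ fun s hs => ?_)
  simp only [Function.comp_apply, mixDirac_apply]
  exact Finset.measurable_sum _ fun i _ =>
    (measurable_stdSimplex_apply i).ennreal_ofReal.mul_const _

end MixDirac

variable {X : Type*} [Fintype X]

lemma bar_mixDirac {ι : Type*} [Fintype ι] (w : stdSimplex ℝ ι) (ν : ι → Δ X) :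
    bar (mixDirac w ν) = ∑ i, w i • (ν i : X → ℝ) := by
  funext x
  simp [bar, integral_mixDirac]

open scoped Classical in
noncomputable def fullInfo (μ : Δ X) : PM X := mixDirac μ stdSimplex.vertex

lemma measurable_fullInfo : Measurable (fullInfo (X := X)) := measurable_mixDirac _

lemma bar_fullInfo (μ : Δ X) : bar (fullInfo μ) = μ := by
  classical
  rw [fullInfo, bar_mixDirac]
  simp_rw [stdSimplex.vertex_coe, ← Pi.single_smul', smul_eq_mul, mul_one]
  exact Finset.univ_sum_single _

lemma meanPreservingAE_fullInfo (π : PM X) : MeanPreservingAE π fullInfo :=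
  Filter.Eventually.of_forall bar_fullInfo

noncomputable def toKernel (k : Δ X → PM X) (hk : Measurable k) : Kernel (Δ X) (Δ X) :=
  ⟨fun μ => k μ, measurable_pmCoe.comp hk⟩

lemma coe_comp (π : PM X) (k : Δ X → PM X) (hk : Measurable k) :
    (comp π k hk : Measure (Δ X)) = toKernel k hk ∘ₘ π := rfl

lemma integral_comp (π : PM X) {k : Δ X → PM X} (hk : Measurable k) {f : Δ X → ℝ}
    (hf : Integrable f (comp π k hk : Measure (Δ X))) :
    ∫ ν, f ν ∂(comp π k hk : Measure (Δ X)) = ∫ μ, ∫ ν, f ν ∂(k μ : Measure (Δ X)) ∂π := by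
  rw [coe_comp, Measure.comp_eq_comp_const_apply] at hf ⊢
  rw [Kernel.integral_comp hf]
  rfl

lemma integrable_integral_comp (π : PM X) {k : Δ X → PM X} (hk : Measurable k) {f : Δ X → ℝ}
    (hf : Integrable f (comp π k hk : Measure (Δ X))) :
    Integrable (fun μ => ∫ ν, f ν ∂(k μ : Measure (Δ X))) π := by
  rw [coe_comp, Measure.comp_eq_comp_const_apply] at hf
  exact hf.integral_comp

lemma axiom1_of_additive {C : PM X → ℝ} (hC0 : ∀ π, 0 ≤ C π) (hadd : Additive C) : Axiom1 C :=
  fun π k hk hmp => by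
    rw [hadd π k hk hmp]
    exact le_add_of_nonneg_right (integral_nonneg fun μ => hC0 (k μ))

variable [Nonempty X]

lemma coe_barPt (π : PM X) : ⇑(barPt π) = bar π := rfl

lemma barPt_fullInfo (μ : Δ X) : barPt (fullInfo μ) = μ := Subtype.ext (bar_fullInfo μ)

lemma comp_fullInfo (π : PM X) :
    comp π fullInfo measurable_fullInfo = fullInfo (barPt π) := by
  refine ProbabilityMeasure.toMeasure_injective (Measure.ext fun s hs => ?_)
  rw [coe_comp, Measure.bind_apply hs (Kernel.aemeasurable _)]
  simp only [toKernel, Kernel.coe_mk, fullInfo, mixDirac_apply]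
  rw [lintegral_finsetSum _ fun x _ => (measurable_stdSimplex_apply x).ennreal_ofReal.mul_const _]
  refine Finset.sum_congr rfl fun x _ => ?_
  rw [lintegral_mul_const _ (measurable_stdSimplex_apply x).ennreal_ofReal,
    ← ofReal_integral_eq_lintegral_ofReal (eval_integrable π x)
      (Filter.Eventually.of_forall fun ν => stdSimplex.zero_le ν x)]
  rfl

lemma bar_comp (π : PM X) {k : Δ X → PM X} (hk : Measurable k) (hmp : MeanPreservingAE π k) :
    bar (comp π k hk) = bar π := by
  funext x
  rw [bar, integral_comp π hk (eval_integrable _ x)]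
  refine integral_congr_ae ?_
  filter_upwards [hmp] with μ hμ
  exact congrFun hμ x

section Potential

variable {C : PM X → ℝ} {h : Δ X → ℝ}

lemma additive_of_eq_integral_sub (hint : ∀ π : PM X, Integrable h π)
    (hrep : ∀ π, C π = ∫ ν, h ν ∂π - h (barPt π)) : Additive C := by
  intro π k hk hmp
  have hCk : ∫ μ, C (k μ) ∂π = ∫ μ, (∫ ν, h ν ∂(k μ : Measure (Δ X))) - h μ ∂π := by
    refine integral_congr_ae ?_
    filter_upwards [hmp] with μ hμ
    rw [hrep, show barPt (k μ) = μ from Subtype.ext hμ]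
  rw [hrep, hrep π, show barPt (comp π k hk) = barPt π from Subtype.ext (bar_comp π hk hmp),
    integral_comp π hk (hint _), hCk,
    integral_sub (integrable_integral_comp π hk (hint _)) (hint π)]
  ring

open scoped Classical in
lemma eq_sum_sub_fullInfo (hrep : ∀ π, C π = ∫ ν, h ν ∂π - h (barPt π)) (μ : Δ X) :
    h μ = ∑ x, μ x * h (stdSimplex.vertex x) - C (fullInfo μ) := by
  have hI : ∫ ν, h ν ∂(fullInfo μ : Measure (Δ X)) = ∑ x, μ x * h (stdSimplex.vertex x) :=
    integral_mixDirac _ _ _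
  rw [hrep (fullInfo μ), hI, barPt_fullInfo]
  ring

lemma integrable_of_eq_integral_sub (hC : ClassC C)
    (hrep : ∀ π, C π = ∫ ν, h ν ∂π - h (barPt π)) (π : PM X) : Integrable h π := by
  classical
  obtain ⟨M, hM⟩ := hC.bounded
  rw [funext (eq_sum_sub_fullInfo hrep)]
  refine (integrable_finsetSum _ fun x _ => (eval_integrable π x).mul_const _).sub
    (Integrable.of_bound (hC.measurable.comp measurable_fullInfo).aestronglyMeasurable M
      (Filter.Eventually.of_forall fun μ => ?_))
  rw [Real.norm_of_nonneg (hC.nonneg _)]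
  exact hM _

lemma eq_integral_sub_of_additive (hadd : Additive C) (π : PM X) :
    C π = ∫ μ, -C (fullInfo μ) ∂π - -C (fullInfo (barPt π)) := by
  have := hadd π fullInfo measurable_fullInfo (meanPreservingAE_fullInfo π)
  rw [comp_fullInfo] at this
  rw [integral_neg]
  linarith

lemma convexOn_extend_of_jensen (hJ : ∀ π : PM X, h (barPt π) ≤ ∫ ν, h ν ∂π) :
    ConvexOn ℝ (Δ X) (Function.extend (⇑) h 0) := by
  refine ⟨convex_stdSimplex ℝ X, fun v hv w hw a b ha hb hab => ?_⟩
  obtain ⟨v, rfl⟩ : ∃ ν : Δ X, ⇑ν = v := ⟨⟨v, hv⟩, rfl⟩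
  obtain ⟨w, rfl⟩ : ∃ ν : Δ X, ⇑ν = w := ⟨⟨w, hw⟩, rfl⟩
  let t : stdSimplex ℝ (Fin 2) := ⟨![a, b], fun i => by fin_cases i <;> simpa, by simpa⟩
  have ht : t 0 = a ∧ t 1 = b := ⟨rfl, rfl⟩
  have hbar : ⇑(barPt (mixDirac t ![v, w])) = a • ⇑v + b • ⇑w := by
    simp [coe_barPt, bar_mixDirac, ht]
  have hint : ∫ ν, h ν ∂(mixDirac t ![v, w] : Measure (Δ X)) = a * h v + b * h w := by
    simp [integral_mixDirac, ht]
  simp only [← hbar, DFunLike.coe_injective.extend_apply, smul_eq_mul]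
  exact (hJ _).trans hint.le

lemma ups_of_eq_integral_sub (hC0 : ∀ π, 0 ≤ C π)
    (hrep : ∀ π, C π = ∫ ν, h ν ∂π - h (barPt π)) : UPS C := by
  refine ⟨Function.extend (⇑) h 0,
    convexOn_extend_of_jensen fun π => by linarith [hC0 π, hrep π], fun π => ?_⟩
  rw [← coe_barPt]
  simp only [DFunLike.coe_injective.extend_apply]
  exact hrep π

end Potential

/-- Lemma `lem:add`: a cost C ∈ 𝒞 is uniformly posterior separable
iff it satisfies Blackwell monotonicity (Axiom 1) and additivity. -/
theorem ups_iff_mono_additive (C : PM X → ℝ) (hC : ClassC C) :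
    UPS C ↔ (Axiom1 C ∧ Additive C) := by
  constructor
  · rintro ⟨H, -, hH⟩
    have hadd : Additive C :=
      additive_of_eq_integral_sub (integrable_of_eq_integral_sub hC hH) hH
    exact ⟨axiom1_of_additive hC.nonneg hadd, hadd⟩
  · rintro ⟨-, hadd⟩
    exact ups_of_eq_integral_sub hC.nonneg (eq_integral_sub_of_additive hadd)

end IC
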